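/- arXiv:1902.06629 — 12 statements merged into one kernel-verified Lean document; each statement's English description precedes it below -/
import Mathlib

section
/- (Fact 4: Cutoff Relative Order) Let U : ℝ → Fin 3 → ℝ satisfy the single-crossing property in the natural ordering with real cutoffs c₁₂, c₁₃, c₂₃ (no alternative dominated). Then one and only one of the following holds: (i) c₁₂ < c₁₃ < c₂₃, and for every ν ∈ (c₁₂, c₁₃), U ν 2 > U ν 1 and U ν 2 > U ν 3 (alternative 2 is the first best there); (ii) c₁₂ > c₁₃ > c₂₃, and for every ν, U ν 1 > U ν 2 or U ν 3 > U ν 2 (alternative 2 is never the first best); (iii) c₁₂ = c₁₃ = c₂₃, and for every ν ≠ c₁₂, U ν 1 > U ν 2 or U ν 3 > U ν 2, while at ν = c₁₂ there is a three-way tie U ν 1 = U ν 2 = U ν 3. -/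
/-! Alternatives 1 and 3 tie at `c₁₃`, so there alternative 2 compares with 3 exactly as it
compares with 1, which the position of `c₁₃` relative to `c₁₂` decides. Single crossing of 2 and 3
then puts `c₂₃` on the same side of `c₁₃` as `c₁₃` is of `c₁₂`, or makes it equal when
`c₁₂ = c₁₃`. -/

/-- Case (i): `c₁₂ < c₁₃ < c₂₃` and alternative 2 (index 1) is the first best on
`(c₁₂, c₁₃)`. -/
def CutoffCaseI (U : ℝ → Fin 3 → ℝ) (c12 c13 c23 : ℝ) : Prop :=
  c12 < c13 ∧ c13 < c23 ∧
    ∀ ν, c12 < ν → ν < c13 → U ν 1 > U ν 0 ∧ U ν 1 > U ν 2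

/-- Case (ii): `c₁₂ > c₁₃ > c₂₃` and alternative 2 (index 1) is never the first best. -/
def CutoffCaseII (U : ℝ → Fin 3 → ℝ) (c12 c13 c23 : ℝ) : Prop :=
  c13 < c12 ∧ c23 < c13 ∧ ∀ ν : ℝ, U ν 0 > U ν 1 ∨ U ν 2 > U ν 1

/-- Case (iii): `c₁₂ = c₁₃ = c₂₃`, alternative 2 (index 1) is strictly worse than
alternative 1 or 3 everywhere except at the common cutoff, where there is a
three-way tie. -/
def CutoffCaseIII (U : ℝ → Fin 3 → ℝ) (c12 c13 c23 : ℝ) : Prop :=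
  c12 = c13 ∧ c13 = c23 ∧
    (∀ ν : ℝ, ν ≠ c12 → U ν 0 > U ν 1 ∨ U ν 2 > U ν 1) ∧
    (U c12 0 = U c12 1 ∧ U c12 1 = U c12 2)

def SingleCrossingAt {α β : Type*} [Preorder α] [Preorder β] (f g : α → β) (c : α) : Prop :=
  (∀ x, x < c → f x > g x) ∧ f c = g c ∧ ∀ x, x > c → f x < g x

namespace SingleCrossingAt

variable {α β : Type*} [LinearOrder α] [Preorder β] {f g : α → β} {c x : α}

theorem lt_cutoff_of_gt (h : SingleCrossingAt f g c) (hx : g x < f x) : x < c := by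
  rcases lt_trichotomy x c with hlt | rfl | hgt
  · exact hlt
  · exact absurd h.2.1 hx.ne'
  · exact absurd (h.2.2 x hgt) hx.asymm

theorem cutoff_lt_of_lt (h : SingleCrossingAt f g c) (hx : f x < g x) : c < x := by
  rcases lt_trichotomy x c with hlt | rfl | hgt
  · exact absurd (h.1 x hlt) hx.asymm
  · exact absurd h.2.1 hx.ne
  · exact hgt

theorem eq_cutoff_of_eq (h : SingleCrossingAt f g c) (hx : f x = g x) : x = c := by
  rcases lt_trichotomy x c with hlt | heq | hgt
  · exact absurd hx (h.1 x hlt).ne'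
  · exact heq
  · exact absurd hx (h.2.2 x hgt).ne

end SingleCrossingAt

section ThreeAlternatives

variable {U : ℝ → Fin 3 → ℝ} {c12 c13 c23 : ℝ}
  (h12 : SingleCrossingAt (U · 0) (U · 1) c12) (h13 : SingleCrossingAt (U · 0) (U · 2) c13)
  (h23 : SingleCrossingAt (U · 1) (U · 2) c23)
include h12 h13 h23

theorem cutoffCaseI_of_lt (h : c12 < c13) : CutoffCaseI U c12 c13 c23 := by
  have h1_gt_2 : U c13 2 < U c13 1 :=
    calc U c13 2 = U c13 0 := h13.2.1.symm
      _ < U c13 1 := h12.2.2 c13 h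
  refine ⟨h, h23.lt_cutoff_of_gt h1_gt_2, fun ν h12ν hν13 => ?_⟩
  have h1_gt_0 : U ν 1 > U ν 0 := h12.2.2 ν h12ν
  exact ⟨h1_gt_0, (h13.1 ν hν13).trans h1_gt_0⟩

theorem cutoffCaseII_of_gt (h : c13 < c12) : CutoffCaseII U c12 c13 c23 := by
  have h1_lt_2 : U c13 1 < U c13 2 :=
    calc U c13 1 < U c13 0 := h12.1 c13 h
      _ = U c13 2 := h13.2.1
  have h23_lt : c23 < c13 := h23.cutoff_lt_of_lt h1_lt_2
  refine ⟨h, h23_lt, fun ν => ?_⟩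
  rcases lt_or_ge ν c12 with hν | hν
  · exact Or.inl (h12.1 ν hν)
  · exact Or.inr (h23.2.2 ν (by linarith))

theorem cutoffCaseIII_of_eq (h : c12 = c13) : CutoffCaseIII U c12 c13 c23 := by
  subst h
  have h1_eq_2 : U c12 1 = U c12 2 := h12.2.1.symm.trans h13.2.1
  have h23_eq : c12 = c23 := h23.eq_cutoff_of_eq h1_eq_2
  subst h23_eq
  refine ⟨rfl, rfl, fun ν hν => ?_, h12.2.1, h1_eq_2⟩
  rcases hν.lt_or_gt with hν | hν
  · exact Or.inl (h12.1 ν hν)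
  · exact Or.inr (h23.2.2 ν hν)

end ThreeAlternatives

/-- Fact 4 (Cutoff Relative Order): with three alternatives satisfying the
single-crossing property in the natural ordering, one and only one of the three cases
holds. Alternatives 1, 2, 3 are indexed by `0, 1, 2 : Fin 3`. -/
theorem cutoff_relative_order (U : ℝ → Fin 3 → ℝ) (c12 c13 c23 : ℝ)
    (h12 : (∀ ν, ν < c12 → U ν 0 > U ν 1) ∧ U c12 0 = U c12 1 ∧
      (∀ ν, ν > c12 → U ν 0 < U ν 1))
    (h13 : (∀ ν, ν < c13 → U ν 0 > U ν 2) ∧ U c13 0 = U c13 2 ∧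
      (∀ ν, ν > c13 → U ν 0 < U ν 2))
    (h23 : (∀ ν, ν < c23 → U ν 1 > U ν 2) ∧ U c23 1 = U c23 2 ∧
      (∀ ν, ν > c23 → U ν 1 < U ν 2)) :
    (CutoffCaseI U c12 c13 c23 ∨ CutoffCaseII U c12 c13 c23 ∨
        CutoffCaseIII U c12 c13 c23) ∧
      ¬(CutoffCaseI U c12 c13 c23 ∧ CutoffCaseII U c12 c13 c23) ∧
      ¬(CutoffCaseI U c12 c13 c23 ∧ CutoffCaseIII U c12 c13 c23) ∧
      ¬(CutoffCaseII U c12 c13 c23 ∧ CutoffCaseIII U c12 c13 c23) := by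
  refine ⟨?_, fun ⟨hI, hII⟩ => hI.1.asymm hII.1, fun ⟨hI, hIII⟩ => hI.1.ne hIII.1,
    fun ⟨hII, hIII⟩ => hII.1.ne' hIII.1⟩
  rcases lt_trichotomy c12 c13 with h | h | h
  · exact Or.inl (cutoffCaseI_of_lt h12 h13 h23 h)
  · exact Or.inr (Or.inr (cutoffCaseIII_of_eq h12 h13 h23 h))
  · exact Or.inr (Or.inl (cutoffCaseII_of_gt h12 h13 h23 h))
end

section
/- (Lemma A.1) Let X be a nonempty compact topological space and let f, g : X → ℝ be continuous functions with f(x) < g(x) for every x ∈ X. Then for every sequence (x_t)_{t ∈ ℕ} in X satisfying f(x_t) = g(x_{t+1}) for all t, there exists a finite index T with f(x_T) < 0. -/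
/-! The gap `g - f` is continuous and positive on a compact space, so it is bounded below by some
`ε > 0`. Then `f (x (t + 1)) ≤ g (x (t + 1)) - ε = f (x t) - ε`: along the sequence, `f` drops by
at least `ε` at every step, and an Archimedean argument makes it negative. -/

theorem CompactSpace.exists_pos_le_of_forall_pos {X : Type*} [TopologicalSpace X] [CompactSpace X]
    [Nonempty X] {h : X → ℝ} (hc : Continuous h) (hpos : ∀ x, 0 < h x) :
    ∃ ε > 0, ∀ x, ε ≤ h x := by
  obtain ⟨z, -, hz⟩ := isCompact_univ.exists_isMinOn Set.univ_nonempty hc.continuousOn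
  exact ⟨h z, hpos z, fun y => hz (Set.mem_univ y)⟩

section Archimedean

variable {α : Type*} [AddCommGroup α] [LinearOrder α] [IsOrderedAddMonoid α]

theorem le_sub_nsmul_of_forall_add_le {a : ℕ → α} {ε : α} (h : ∀ t, a (t + 1) + ε ≤ a t) (t : ℕ) :
    a t ≤ a 0 - t • ε := by
  induction t with
  | zero => simp
  | succ t ih =>
    rw [succ_nsmul, sub_add_eq_sub_sub]
    exact le_sub_iff_add_le.mpr ((h t).trans ih)

theorem exists_lt_of_forall_add_le [Archimedean α] {a : ℕ → α} {ε : α} (hε : 0 < ε)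
    (h : ∀ t, a (t + 1) + ε ≤ a t) (c : α) : ∃ T, a T < c := by
  obtain ⟨T, hT⟩ := Archimedean.arch (a 0 - c) hε
  refine ⟨T + 1, (le_sub_nsmul_of_forall_add_le h (T + 1)).trans_lt ?_⟩
  rw [succ_nsmul, sub_lt_comm]
  exact hT.trans_lt (lt_add_of_pos_right _ hε)

end Archimedean

theorem seq_cutoff_below_zero_general (X : Type*) [TopologicalSpace X] [CompactSpace X]
    (f g : X → ℝ) (hf : Continuous f) (hg : Continuous g)
    (hfg : ∀ x, f x < g x) (x : ℕ → X) (hx : ∀ t, f (x t) = g (x (t + 1))) :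
    ∃ T : ℕ, f (x T) < 0 := by
  have : Nonempty X := ⟨x 0⟩
  obtain ⟨ε, hε, hgap⟩ :=
    CompactSpace.exists_pos_le_of_forall_pos (hg.sub hf) fun y => sub_pos.mpr (hfg y)
  refine exists_lt_of_forall_add_le hε (fun t => ?_) 0
  rw [hx t]
  exact le_sub_iff_add_le'.mp (hgap (x (t + 1)))

/-- Lemma A.1: on a nonempty compact space, if `f < g` pointwise for continuous `f, g`,
then any sequence with `f (x t) = g (x (t+1))` eventually takes `f` below zero. -/
theorem seq_cutoff_below_zero (X : Type*) [TopologicalSpace X] [CompactSpace X]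
    [Nonempty X] (f g : X → ℝ) (hf : Continuous f) (hg : Continuous g)
    (hfg : ∀ x, f x < g x) (x : ℕ → X) (hx : ∀ t, f (x t) = g (x (t + 1))) :
    ∃ T : ℕ, f (x T) < 0 :=
  seq_cutoff_below_zero_general X f g hf hg hfg x hx
end

section
/- (Irrelevance of never-chosen alternatives' consideration in the ARC model) Fix utilities u : Fin D → ℝ and consideration probabilities α : Fin D → ℝ with 0 ≤ α k ≤ 1 for all k, and define p_k(α) = α k · ∏_{k' : u k' > u k} (1 − α k'). Suppose there are alternatives l and m with α m = 1 and u m > u l. Then for every α' : Fin D → [0,1] that agrees with α at every coordinate other than l, and for every alternative k, p_k(α') = p_k(α). -/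
namespace ARC

variable {ι β R : Type*} [Fintype ι] [LT β] [DecidableRel (α := β) (· < ·)] [CommRing R]

def choiceProb (u : ι → β) (α : ι → R) (k : ι) : R :=
  α k * ∏ k' ∈ Finset.univ.filter (fun k' => u k < u k'), (1 - α k')

theorem choiceProb_eq_zero_of_lt {u : ι → β} {α : ι → R} {k m : ι} (hm : α m = 1)
    (hkm : u k < u m) : choiceProb u α k = 0 := by
  have hmem : m ∈ Finset.univ.filter (fun k' => u k < u k') := by simpa using hkm
  rw [choiceProb, Finset.prod_eq_zero hmem (by rw [hm, sub_self]), mul_zero]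

theorem choiceProb_congr {u : ι → β} {α α' : ι → R} {k : ι} (hk : α' k = α k)
    (hdom : ∀ k', u k < u k' → α' k' = α k') : choiceProb u α' k = choiceProb u α k := by
  unfold choiceProb
  rw [hk]
  congr 1
  refine Finset.prod_congr rfl fun k' hk' => ?_
  rw [hdom k' (Finset.mem_filter.mp hk').2]

end ARC

theorem arc_never_chosen_irrelevant_general (D : ℕ) (u : Fin D → ℝ) (α α' : Fin D → ℝ)
    (l m : Fin D) (hm : α m = 1) (hml : u m > u l)
    (hagree : ∀ k, k ≠ l → α' k = α k) :
    ∀ k : Fin D,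
      α' k * ∏ k' ∈ Finset.univ.filter (fun k' => u k' > u k), (1 - α' k') =
      α k * ∏ k' ∈ Finset.univ.filter (fun k' => u k' > u k), (1 - α k') := by
  intro k
  have hα'm : α' m = 1 := by rw [hagree m (ne_of_apply_ne u hml.ne'), hm]
  show ARC.choiceProb u α' k = ARC.choiceProb u α k
  rcases lt_or_ge (u k) (u m) with hkm | hmk
  · rw [ARC.choiceProb_eq_zero_of_lt hα'm hkm, ARC.choiceProb_eq_zero_of_lt hm hkm]
  · have hne : ∀ k', u m ≤ u k' → k' ≠ l := fun k' hk' => ne_of_apply_ne u (hml.trans_le hk').ne'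
    exact ARC.choiceProb_congr (hagree k (hne k hmk))
      fun k' hk' => hagree k' (hne k' (hmk.trans hk'.le))

/-- In the ARC model, the consideration probability of a never-chosen alternative `l`
(one that is dominated by an always-considered alternative `m`) is irrelevant: changing
`α` at coordinate `l` leaves every choice probability unchanged. -/
theorem arc_never_chosen_irrelevant (D : ℕ) (u : Fin D → ℝ) (α α' : Fin D → ℝ)
    (hα : ∀ k, 0 ≤ α k ∧ α k ≤ 1) (hα' : ∀ k, 0 ≤ α' k ∧ α' k ≤ 1)
    (l m : Fin D) (hm : α m = 1) (hml : u m > u l)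
    (hagree : ∀ k, k ≠ l → α' k = α k) :
    ∀ k : Fin D,
      α' k * ∏ k' ∈ Finset.univ.filter (fun k' => u k' > u k), (1 - α' k') =
      α k * ∏ k' ∈ Finset.univ.filter (fun k' => u k' > u k), (1 - α k') :=
  arc_never_chosen_irrelevant_general D u α α' l m hm hml hagree
end

section
/- (Lemma B.1, CARA case) Let y₀ > y₁ > y₂ > 0 be real numbers. The function r : ℝ → ℝ defined by r(ν) = (exp(−ν y₂) − exp(−ν y₁)) / (exp(−ν y₁) − exp(−ν y₀)) for ν ≠ 0 and r(0) = (y₁ − y₂)/(y₀ − y₁) is strictly increasing on ℝ. -/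
open Real intervalIntegral MeasureTheory

noncomputable def caraPhi (x : ℝ) : ℝ := ∫ t in (0:ℝ)..1, Real.exp (x * t)

lemma caraPhi_pos (x : ℝ) : 0 < caraPhi x := by
  apply intervalIntegral_pos_of_pos (f := fun t => Real.exp (x * t)) ?_ (fun t => Real.exp_pos _) one_pos
  exact (Real.continuous_exp.comp (continuous_const.mul continuous_id)).intervalIntegrable 0 1

lemma caraPhi_strictMono : StrictMono caraPhi := by
  intro x y hxy
  apply integral_lt_integral_of_continuousOn_of_le_of_exists_lt one_pos
  · exact (Real.continuous_exp.comp (continuous_const.mul continuous_id)).continuousOn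
  · exact (Real.continuous_exp.comp (continuous_const.mul continuous_id)).continuousOn
  · intro t ht
    exact Real.exp_le_exp.2 (mul_le_mul_of_nonneg_right hxy.le (le_of_lt ht.1))
  · exact ⟨1, by norm_num, Real.exp_lt_exp.2 (by simpa using hxy)⟩

lemma caraPhi_eq {x : ℝ} (hx : x ≠ 0) : caraPhi x = (Real.exp x - 1) / x := by
  unfold caraPhi
  rw [integral_comp_mul_left (f := Real.exp) hx]
  simp [integral_exp, smul_eq_mul, div_eq_inv_mul]

lemma caraPhi_zero : caraPhi 0 = 1 := by simp [caraPhi]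


lemma cara_aux (a b ν E F : ℝ) (ha : a ≠ 0) (hb : b ≠ 0) (hν : ν ≠ 0) (hF : 1 - F ≠ 0) :
    (E - 1) / (1 - F) = (a * ((E - 1) / (a * ν))) / (b * ((F - 1) / (-(b * ν)))) := by
  have h1 : a * ((E - 1) / (a * ν)) = (E - 1) / ν := by
    field_simp
  have h2 : b * ((F - 1) / (-(b * ν))) = (1 - F) / ν := by
    field_simp; ring
  rw [h1, h2, div_div_div_cancel_right₀ hν]

/-- Lemma B.1 (CARA case): for wealth levels `y₀ > y₁ > y₂ > 0`, the CARA utility-difference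
ratio `(u_ν(y₁) − u_ν(y₂)) / (u_ν(y₀) − u_ν(y₁))`, extended by continuity at `ν = 0`,
is strictly increasing in the risk-aversion parameter `ν`. -/
theorem cara_ratio_strictMono (y₀ y₁ y₂ : ℝ) (h01 : y₀ > y₁) (h12 : y₁ > y₂)
    (h2 : y₂ > 0) (r : ℝ → ℝ)
    (hr : ∀ ν : ℝ, ν ≠ 0 →
      r ν = (Real.exp (-ν * y₂) - Real.exp (-ν * y₁)) /
        (Real.exp (-ν * y₁) - Real.exp (-ν * y₀)))
    (hr0 : r 0 = (y₁ - y₂) / (y₀ - y₁)) :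
    StrictMono r := by
  set a := y₁ - y₂ with ha
  set b := y₀ - y₁ with hb
  have ha0 : 0 < a := by simp only [ha]; linarith
  have hb0 : 0 < b := by simp only [hb]; linarith
  have key : ∀ ν : ℝ, r ν = (a * caraPhi (a * ν)) / (b * caraPhi (-(b * ν))) := by
    intro ν
    rcases eq_or_ne ν 0 with h | h
    · simp [h, caraPhi_zero, hr0]
    · have haν : a * ν ≠ 0 := mul_ne_zero ha0.ne' h
      have hbν : (-(b * ν)) ≠ 0 := neg_ne_zero.2 (mul_ne_zero hb0.ne' h)
      rw [hr ν h, caraPhi_eq haν, caraPhi_eq hbν]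
      have e1 : Real.exp (-ν * y₂) = Real.exp (-ν * y₁) * Real.exp (a * ν) := by
        rw [← Real.exp_add, ha]; ring_nf
      have e2 : Real.exp (-ν * y₀) = Real.exp (-ν * y₁) * Real.exp (-(b * ν)) := by
        rw [← Real.exp_add, hb]; ring_nf
      rw [e1, e2]
      have hexp : Real.exp (-ν * y₁) ≠ 0 := (Real.exp_pos _).ne'
      have hF : 1 - Real.exp (-(b*ν)) ≠ 0 := by
        rw [sub_ne_zero]
        exact fun hc => hbν ((Real.exp_eq_one_iff _).1 hc.symm)
      have L1 : Real.exp (-ν*y₁) * Real.exp (a*ν) - Real.exp (-ν*y₁)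
          = Real.exp (-ν*y₁) * (Real.exp (a*ν) - 1) := by ring
      have L2 : Real.exp (-ν*y₁) - Real.exp (-ν*y₁) * Real.exp (-(b*ν))
          = Real.exp (-ν*y₁) * (1 - Real.exp (-(b*ν))) := by ring
      rw [L1, L2, mul_div_mul_left _ _ hexp]
      exact cara_aux a b ν _ _ ha0.ne' hb0.ne' h hF
  intro ν μ hνμ
  rw [key ν, key μ]
  have h1 : a * caraPhi (a * ν) < a * caraPhi (a * μ) :=
    mul_lt_mul_of_pos_left (caraPhi_strictMono (by nlinarith)) ha0
  have h2' : b * caraPhi (-(b * μ)) < b * caraPhi (-(b * ν)) :=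
    mul_lt_mul_of_pos_left (caraPhi_strictMono (by nlinarith)) hb0
  exact div_lt_div₀ h1 h2'.le (mul_pos ha0 (caraPhi_pos _)).le
    (mul_pos hb0 (caraPhi_pos _))
end

section
/- (Lemma B.2, CARA case) Let y₀ > y₁ > y₂ > y₃ > 0 be real numbers. The function M : ℝ → ℝ defined by M(ν) = (exp(−ν y₃) − exp(−ν y₂)) / (exp(−ν y₁) − exp(−ν y₀)) for ν ≠ 0 and M(0) = (y₂ − y₃)/(y₀ − y₁) is strictly increasing on ℝ. -/
/-!
Since `u_ν(b) - u_ν(a) = ν ∫_a^b exp(-ν t) dt`, the factor `ν` cancels in the ratio, so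
`M ν = L ν y₃ y₂ / L ν y₁ y₀` for every `ν`, including `ν = 0`, where
`L = intervalLaplace`. For `μ < ν` and `t < s` we have
`exp(-μ t) exp(-ν s) < exp(-ν t) exp(-μ s)`; integrating over `t ∈ [y₃, y₂]` and
`s ∈ [y₁, y₀]` gives `L μ y₃ y₂ · L ν y₁ y₀ < L ν y₃ y₂ · L μ y₁ y₀`, i.e. `M μ < M ν`.
-/

open Real Set MeasureTheory intervalIntegral

theorem intervalIntegral_lt_of_lt_on_Ioo {f g : ℝ → ℝ} {a b : ℝ} (hab : a < b)
    (hf : IntervalIntegrable f volume a b) (hg : IntervalIntegrable g volume a b)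
    (hlt : ∀ x ∈ Ioo a b, f x < g x) : ∫ x in a..b, f x < ∫ x in a..b, g x := by
  rw [← sub_pos, ← integral_sub hg hf]
  exact intervalIntegral_pos_of_pos_on (hg.sub hf) (fun x hx => sub_pos.2 (hlt x hx)) hab

noncomputable def intervalLaplace (ν a b : ℝ) : ℝ := ∫ t in a..b, exp (-ν * t)

theorem intervalLaplace_zero (a b : ℝ) : intervalLaplace 0 a b = b - a := by
  simp [intervalLaplace]

theorem intervalLaplace_of_ne_zero {ν : ℝ} (hν : ν ≠ 0) (a b : ℝ) :
    intervalLaplace ν a b = (exp (-ν * a) - exp (-ν * b)) / ν := by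
  rw [intervalLaplace, integral_comp_mul_left (fun x => exp x) (neg_ne_zero.2 hν),
    integral_exp, smul_eq_mul, inv_neg, div_eq_inv_mul]
  ring

theorem intervalLaplace_pos (ν : ℝ) {a b : ℝ} (hab : a < b) : 0 < intervalLaplace ν a b :=
  intervalIntegral_pos_of_pos (Continuous.intervalIntegrable (by fun_prop) a b)
    (fun _ => exp_pos _) hab

theorem exp_mul_exp_lt_exp_mul_exp {μ ν t s : ℝ} (hμν : μ < ν) (hts : t < s) :
    exp (-μ * t) * exp (-ν * s) < exp (-ν * t) * exp (-μ * s) := by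
  rw [← exp_add, ← exp_add, exp_lt_exp]
  nlinarith

theorem exp_mul_intervalLaplace_lt {μ ν t c d : ℝ} (hμν : μ < ν) (htc : t ≤ c) (hcd : c < d) :
    exp (-μ * t) * intervalLaplace ν c d < exp (-ν * t) * intervalLaplace μ c d := by
  rw [intervalLaplace.eq_1 ν, intervalLaplace.eq_1 μ, ← intervalIntegral.integral_const_mul,
    ← intervalIntegral.integral_const_mul]
  exact intervalIntegral_lt_of_lt_on_Ioo hcd (Continuous.intervalIntegrable (by fun_prop) _ _)
    (Continuous.intervalIntegrable (by fun_prop) _ _)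
    fun s hs => exp_mul_exp_lt_exp_mul_exp hμν (htc.trans_lt hs.1)

theorem intervalLaplace_mul_lt {μ ν a b c d : ℝ} (hμν : μ < ν) (hab : a < b) (hbc : b ≤ c)
    (hcd : c < d) :
    intervalLaplace μ a b * intervalLaplace ν c d <
      intervalLaplace ν a b * intervalLaplace μ c d := by
  rw [intervalLaplace.eq_1 μ a, intervalLaplace.eq_1 ν a, ← intervalIntegral.integral_mul_const,
    ← intervalIntegral.integral_mul_const]
  exact intervalIntegral_lt_of_lt_on_Ioo hab (Continuous.intervalIntegrable (by fun_prop) _ _)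
    (Continuous.intervalIntegrable (by fun_prop) _ _)
    fun t ht => exp_mul_intervalLaplace_lt hμν (ht.2.le.trans hbc) hcd

theorem strictMono_intervalLaplace_div {a b c d : ℝ} (hab : a < b) (hbc : b ≤ c) (hcd : c < d) :
    StrictMono fun ν => intervalLaplace ν a b / intervalLaplace ν c d := fun μ ν hμν => by
  rw [div_lt_div_iff₀ (intervalLaplace_pos μ hcd) (intervalLaplace_pos ν hcd)]
  exact intervalLaplace_mul_lt hμν hab hbc hcd

theorem cara_ratio_extended_strictMono_general (y₀ y₁ y₂ y₃ : ℝ) (h01 : y₀ > y₁)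
    (h12 : y₁ > y₂) (h23 : y₂ > y₃) (M : ℝ → ℝ)
    (hM : ∀ ν : ℝ, ν ≠ 0 →
      M ν = (Real.exp (-ν * y₃) - Real.exp (-ν * y₂)) /
        (Real.exp (-ν * y₁) - Real.exp (-ν * y₀)))
    (hM0 : M 0 = (y₂ - y₃) / (y₀ - y₁)) :
    StrictMono M := by
  have hM_eq : M = fun ν => intervalLaplace ν y₃ y₂ / intervalLaplace ν y₁ y₀ := by
    funext ν
    rcases eq_or_ne ν 0 with rfl | hν
    · rw [hM0, intervalLaplace_zero, intervalLaplace_zero]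
    · rw [hM ν hν, intervalLaplace_of_ne_zero hν, intervalLaplace_of_ne_zero hν,
        div_div_div_cancel_right₀ hν]
  rw [hM_eq]
  exact strictMono_intervalLaplace_div h23 h12.le h01

/-- Lemma B.2 (CARA case): for wealth levels `y₀ > y₁ > y₂ > y₃ > 0`, the CARA
utility-difference ratio `(u_ν(y₂) − u_ν(y₃)) / (u_ν(y₀) − u_ν(y₁))`, extended by
continuity at `ν = 0`, is strictly increasing in the risk-aversion parameter `ν`. -/
theorem cara_ratio_extended_strictMono (y₀ y₁ y₂ y₃ : ℝ) (h01 : y₀ > y₁)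
    (h12 : y₁ > y₂) (h23 : y₂ > y₃) (h3 : y₃ > 0) (M : ℝ → ℝ)
    (hM : ∀ ν : ℝ, ν ≠ 0 →
      M ν = (Real.exp (-ν * y₃) - Real.exp (-ν * y₂)) /
        (Real.exp (-ν * y₁) - Real.exp (-ν * y₀)))
    (hM0 : M 0 = (y₂ - y₃) / (y₀ - y₁)) :
    StrictMono M :=
  cara_ratio_extended_strictMono_general y₀ y₁ y₂ y₃ h01 h12 h23 M hM hM0
end

section
/- (Proposition B.1, existence and uniqueness of the CARA indifference cutoff) Let w, p_j, p_k, d_j, d_k be reals with p_j < p_k, d_j > d_k > 0, p_j + d_j > p_k + d_k, and w > p_j + d_j. Define G : ℝ → ℝ by G(ν) = (exp(−ν(w − p_j − d_j)) − exp(−ν(w − p_k − d_k))) / (exp(−ν(w − p_k)) − exp(−ν(w − p_j))) for ν ≠ 0 and G(0) = (p_j + d_j − p_k − d_k)/(p_k − p_j). Then G is continuous and strictly increasing on ℝ, G(ν) → 0 as ν → −∞ and G(ν) → +∞ as ν → +∞; consequently, for every μ ∈ (0,1) there is a unique ν ∈ ℝ with G(ν) = (1 − μ)/μ. Moreover, for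 every ν ≠ 0, EU(ν; p_j, d_j) = EU(ν; p_k, d_k) if and only if G(ν) = (1 − μ)/μ. -/
open Filter MeasureTheory Set

noncomputable def caraII (ν u v : ℝ) : ℝ := ∫ t in u..v, Real.exp (-ν * t)

lemma caraII_pos {u v : ℝ} (huv : u < v) (ν : ℝ) : 0 < caraII ν u v := by
  apply intervalIntegral.integral_pos huv
  · exact (Real.continuous_exp.comp (continuous_const.mul continuous_id)).continuousOn
  · intro x _; positivity
  · exact ⟨u, Set.left_mem_Icc.2 huv.le, by positivity⟩

lemma caraII_eq {ν : ℝ} (hν : ν ≠ 0) (u v : ℝ) :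
    caraII ν u v = (Real.exp (-ν * u) - Real.exp (-ν * v)) / ν := by
  have hd : ∀ x ∈ Set.uIcc u v, HasDerivAt (fun t => Real.exp (-ν * t) / (-ν)) (Real.exp (-ν * x)) x := by
    intro x _
    have h1 : HasDerivAt (fun t : ℝ => -ν * t) (-ν) x := by
      simpa using (hasDerivAt_id x).const_mul (-ν)
    have h2 := (Real.hasDerivAt_exp (-ν * x)).comp x h1
    have h3 := h2.div_const (-ν)
    simpa [mul_div_assoc, div_self hν] using h3
  have := intervalIntegral.integral_eq_sub_of_hasDerivAt hd
    ((Real.continuous_exp.comp (continuous_const.mul continuous_id)).intervalIntegrable u v)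
  rw [caraII, this, ← sub_div, div_neg, ← neg_div, neg_sub]

lemma caraII_zero (u v : ℝ) : caraII 0 u v = v - u := by
  simp [caraII]

lemma caraII_cont (u v : ℝ) : Continuous fun ν => caraII ν u v := by
  exact intervalIntegral.continuous_parametric_intervalIntegral_of_continuous'
    (f := fun (ν : ℝ) (t : ℝ) => Real.exp (-ν * t)) (by fun_prop) u v

lemma caraII_mono {a b c e : ℝ} (hab : a < b) (hbc : b < c) (hce : c < e)
    {ν₁ ν₂ : ℝ} (h : ν₁ < ν₂) :
    caraII ν₁ a b * caraII ν₂ c e < caraII ν₂ a b * caraII ν₁ c e := by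
  set C₁ := caraII ν₁ c e with hC₁def
  set C₂ := caraII ν₂ c e with hC₂def
  have hC₁ : 0 < C₁ := caraII_pos hce ν₁
  have hcont : ∀ μ : ℝ, Continuous fun t : ℝ => Real.exp (-μ * t) := fun μ => by fun_prop
  have key : C₂ ≤ Real.exp ((ν₁ - ν₂) * c) * C₁ := by
    have hle : caraII ν₂ c e ≤ ∫ s in c..e, Real.exp ((ν₁ - ν₂) * c) * Real.exp (-ν₁ * s) := by
      apply intervalIntegral.integral_mono_on hce.le
        ((hcont ν₂).intervalIntegrable c e)
        ((continuous_const.mul (hcont ν₁)).intervalIntegrable c e)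
      intro s hs
      show Real.exp (-ν₂ * s) ≤ Real.exp ((ν₁ - ν₂) * c) * Real.exp (-ν₁ * s)
      rw [← Real.exp_add]
      apply Real.exp_le_exp.2
      nlinarith [hs.1]
    calc C₂ ≤ ∫ s in c..e, Real.exp ((ν₁ - ν₂) * c) * Real.exp (-ν₁ * s) := hle
      _ = Real.exp ((ν₁ - ν₂) * c) * C₁ := by
          rw [intervalIntegral.integral_const_mul]; rfl
  have hpt : ∀ t : ℝ, t ≤ b → Real.exp (-ν₁ * t) * C₂ < Real.exp (-ν₂ * t) * C₁ := by
    intro t ht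
    have h1 : Real.exp (-ν₁ * t) * C₂ ≤ Real.exp (-ν₁ * t) * (Real.exp ((ν₁ - ν₂) * c) * C₁) :=
      mul_le_mul_of_nonneg_left key (Real.exp_pos _).le
    have h2 : Real.exp ((ν₁ - ν₂) * c) * C₁ < Real.exp ((ν₁ - ν₂) * t) * C₁ := by
      apply mul_lt_mul_of_pos_right _ hC₁
      apply Real.exp_lt_exp.2
      nlinarith
    have h3 : Real.exp (-ν₁ * t) * (Real.exp ((ν₁ - ν₂) * t) * C₁) = Real.exp (-ν₂ * t) * C₁ := by
      rw [← mul_assoc, ← Real.exp_add]; ring_nf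
    calc Real.exp (-ν₁ * t) * C₂ ≤ Real.exp (-ν₁ * t) * (Real.exp ((ν₁ - ν₂) * c) * C₁) := h1
      _ < Real.exp (-ν₁ * t) * (Real.exp ((ν₁ - ν₂) * t) * C₁) :=
          mul_lt_mul_of_pos_left h2 (Real.exp_pos _)
      _ = Real.exp (-ν₂ * t) * C₁ := h3
  have main : (∫ t in a..b, Real.exp (-ν₁ * t) * C₂) < ∫ t in a..b, Real.exp (-ν₂ * t) * C₁ := by
    apply intervalIntegral.integral_lt_integral_of_continuousOn_of_le_of_exists_lt hab
      ((hcont ν₁).mul continuous_const).continuousOn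
      ((hcont ν₂).mul continuous_const).continuousOn
    · exact fun x hx => (hpt x hx.2).le
    · exact ⟨a, Set.left_mem_Icc.2 hab.le, hpt a hab.le⟩
  calc caraII ν₁ a b * C₂ = ∫ t in a..b, Real.exp (-ν₁ * t) * C₂ := by
        rw [intervalIntegral.integral_mul_const]; rfl
    _ < ∫ t in a..b, Real.exp (-ν₂ * t) * C₁ := main
    _ = caraII ν₂ a b * C₁ := by rw [intervalIntegral.integral_mul_const]; rfl

/-- Proposition B.1 (existence and uniqueness of the CARA indifference cutoff):
the indifference ratio `G`, extended by continuity at `ν = 0`, is continuous and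
strictly increasing, tends to `0` at `−∞` and to `+∞` at `+∞`; hence for every claim
probability `μ ∈ (0,1)` there is a unique root of `G ν = (1 − μ)/μ`, and for `ν ≠ 0`
this root equation is equivalent to indifference between the two contracts in CARA
expected utility. -/
theorem cara_cutoff_exists_unique (w pj pk dj dk : ℝ)
    (hp : pj < pk) (hd : dj > dk) (hdk : dk > 0) (hfosd : pj + dj > pk + dk)
    (hw : w > pj + dj) (G : ℝ → ℝ)
    (hG : ∀ ν : ℝ, ν ≠ 0 →
      G ν = (Real.exp (-ν * (w - pj - dj)) - Real.exp (-ν * (w - pk - dk))) /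
        (Real.exp (-ν * (w - pk)) - Real.exp (-ν * (w - pj))))
    (hG0 : G 0 = (pj + dj - pk - dk) / (pk - pj)) :
    Continuous G ∧ StrictMono G ∧
      Tendsto G atBot (nhds 0) ∧ Tendsto G atTop atTop ∧
      ∀ μ : ℝ, 0 < μ → μ < 1 →
        (∃! ν : ℝ, G ν = (1 - μ) / μ) ∧
        ∀ ν : ℝ, ν ≠ 0 →
          ((-(1 - μ) * Real.exp (-ν * (w - pj)) - μ * Real.exp (-ν * (w - pj - dj)) =
              -(1 - μ) * Real.exp (-ν * (w - pk)) - μ * Real.exp (-ν * (w - pk - dk))) ↔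
            G ν = (1 - μ) / μ) := by
  set a := w - pj - dj with ha_def
  set b := w - pk - dk with hb_def
  set c := w - pk with hc_def
  set e := w - pj with he_def
  have hab : a < b := by simp only [ha_def, hb_def]; linarith
  have hbc : b < c := by simp only [hb_def, hc_def]; linarith
  have hce : c < e := by simp only [hc_def, he_def]; linarith
  -- G equals the ratio of interval integrals everywhere
  have hGH : ∀ ν : ℝ, G ν = caraII ν a b / caraII ν c e := by
    intro ν
    rcases eq_or_ne ν 0 with rfl | hν
    · rw [hG0, caraII_zero, caraII_zero]
      have h1 : b - a = pj + dj - pk - dk := by simp only [ha_def, hb_def]; ring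
      have h2 : e - c = pk - pj := by simp only [hc_def, he_def]; ring
      rw [h1, h2]
    · rw [hG ν hν, caraII_eq hν, caraII_eq hν, div_div_div_cancel_right₀ hν]
  have hGfun : G = fun ν => caraII ν a b / caraII ν c e := funext hGH
  -- continuity
  have hcont : Continuous G := by
    rw [hGfun]
    exact (caraII_cont a b).div (caraII_cont c e) (fun ν => (caraII_pos hce ν).ne')
  -- strict monotonicity
  have hmono : StrictMono G := by
    intro ν₁ ν₂ h
    rw [hGH ν₁, hGH ν₂, div_lt_div_iff₀ (caraII_pos hce ν₁) (caraII_pos hce ν₂)]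
    exact caraII_mono hab hbc hce h
  -- denominator nonzero for nonzero ν
  have hden : ∀ ν : ℝ, ν ≠ 0 → Real.exp (-ν * c) - Real.exp (-ν * e) ≠ 0 := by
    intro ν hν
    intro hcon
    have : (-ν * c) = (-ν * e) := Real.exp_injective (by linarith [sub_eq_zero.1 hcon])
    have : c = e := by
      have := mul_left_cancel₀ (neg_ne_zero.2 hν) this
      exact this
    linarith
  -- tendsto atTop
  have htop : Tendsto G atTop atTop := by
    have heq : ∀ᶠ ν in atTop, Real.exp (ν * (c - a)) *
        ((1 - Real.exp (-ν * (b - a))) / (1 - Real.exp (-ν * (e - c)))) = G ν := by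
      filter_upwards [eventually_gt_atTop (0 : ℝ)] with ν hν
      have hν0 : ν ≠ 0 := hν.ne'
      have hd2 : 1 - Real.exp (-ν * (e - c)) ≠ 0 := by
        have : Real.exp (-ν * (e - c)) < 1 := by
          rw [← Real.exp_zero]
          apply Real.exp_lt_exp.2
          nlinarith
        linarith
      rw [hG ν hν0, mul_div_assoc', div_eq_div_iff hd2 (hden ν hν0)]
      simp only [mul_sub, sub_mul, one_mul, mul_one, ← Real.exp_add]
      ring_nf
    apply Tendsto.congr' heq
    apply Filter.Tendsto.atTop_mul_pos (C := 1) one_pos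
    · exact Real.tendsto_exp_atTop.comp (tendsto_id.atTop_mul_const (by linarith : (0:ℝ) < c - a))
    · have key : ∀ β : ℝ, 0 < β →
          Tendsto (fun ν : ℝ => Real.exp (-ν * β)) atTop (nhds 0) := by
        intro β hβ
        apply Real.tendsto_exp_atBot.comp
        have h1 : Tendsto (fun ν : ℝ => ν * β) atTop atTop :=
          tendsto_id.atTop_mul_const hβ
        have h2 := tendsto_neg_atTop_atBot.comp h1
        apply h2.congr
        intro ν
        simp [neg_mul]
      have := ((tendsto_const_nhds (x := (1:ℝ)) (f := atTop)).sub
        (key (b - a) (by linarith))).div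
        ((tendsto_const_nhds (x := (1:ℝ)) (f := atTop)).sub
        (key (e - c) (by linarith))) (by norm_num)
      simpa [Pi.div_def] using this
  -- tendsto atBot
  have hbot : Tendsto G atBot (nhds 0) := by
    have heq : ∀ᶠ ν in atBot, Real.exp (ν * (e - b)) *
        ((Real.exp (ν * (b - a)) - 1) / (Real.exp (ν * (e - c)) - 1)) = G ν := by
      filter_upwards [eventually_lt_atBot (0 : ℝ)] with ν hν
      have hν0 : ν ≠ 0 := hν.ne
      have hd2 : Real.exp (ν * (e - c)) - 1 ≠ 0 := by
        have : Real.exp (ν * (e - c)) < 1 := by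
          rw [← Real.exp_zero]
          apply Real.exp_lt_exp.2
          nlinarith
        linarith
      rw [hG ν hν0, mul_div_assoc', div_eq_div_iff hd2 (hden ν hν0)]
      simp only [mul_sub, sub_mul, one_mul, mul_one, ← Real.exp_add]
      ring_nf
    apply Tendsto.congr' heq
    have key : ∀ β : ℝ, 0 < β →
        Tendsto (fun ν : ℝ => Real.exp (ν * β)) atBot (nhds 0) := by
      intro β hβ
      apply Real.tendsto_exp_atBot.comp
      exact Filter.Tendsto.atBot_mul_const hβ tendsto_id
    have hratio : Tendsto (fun ν : ℝ =>
        (Real.exp (ν * (b - a)) - 1) / (Real.exp (ν * (e - c)) - 1)) atBot (nhds 1) := by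
      have := ((key (b - a) (by linarith)).sub
        (tendsto_const_nhds (x := (1:ℝ)) (f := atBot))).div
        ((key (e - c) (by linarith)).sub
        (tendsto_const_nhds (x := (1:ℝ)) (f := atBot))) (by norm_num)
      simpa [Pi.div_def] using this
    have := (key (e - b) (by linarith)).mul hratio
    simpa using this
  refine ⟨hcont, hmono, hbot, htop, ?_⟩
  intro μ hμ0 hμ1
  constructor
  · -- existence and uniqueness of the root
    have hr : 0 < (1 - μ) / μ := div_pos (by linarith) hμ0
    obtain ⟨ν₁, hν₁⟩ := (hbot.eventually (gt_mem_nhds hr)).exists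
    obtain ⟨ν₂, hν₂⟩ := (htop.eventually_gt_atTop ((1 - μ) / μ)).exists
    have h12 : ν₁ ≤ ν₂ := le_of_lt (hmono.lt_iff_lt.1 (hν₁.trans hν₂))
    obtain ⟨ν, _, hν⟩ := intermediate_value_Icc h12 hcont.continuousOn
      ⟨hν₁.le, hν₂.le⟩
    exact ⟨ν, hν, fun y hy => hmono.injective (hy.trans hν.symm)⟩
  · -- equivalence with expected-utility indifference
    intro ν hν
    rw [hG ν hν, div_eq_div_iff (hden ν hν) hμ0.ne']
    constructor
    · intro h; linear_combination -h
    · intro h; linear_combination -h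
end

section
/- For all real numbers a > b > c > 0, the function t ↦ (log(a + t) − log(b + t)) / (log(a + t) − log(c + t)) is strictly increasing on [0, ∞). -/
open Real

/-- For `r > 1`, `1 - 1/r < log r`. -/
lemma aux_log_lower (r : ℝ) (hr : 1 < r) : 1 - 1/r < Real.log r := by
  have hr0 : (0:ℝ) < r := lt_trans one_pos hr
  have h := Real.log_lt_sub_one_of_pos (x := 1/r) (by positivity)
    (by intro h; rw [div_eq_one_iff_eq hr0.ne'] at h; linarith)
  rw [one_div, Real.log_inv] at h
  have : -Real.log r < 1/r - 1 := by rw [one_div]; linarith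
  linarith

/-- For `1 < r < s`, `(r-1) log s < (s-1) log r`. -/
lemma aux_key2 (r s : ℝ) (hr : 1 < r) (hrs : r < s) :
    (r - 1) * Real.log s < (s - 1) * Real.log r := by
  have hr0 : (0:ℝ) < r := lt_trans one_pos hr
  set φ : ℝ → ℝ := fun u => (r - 1) * Real.log u - (u - 1) * Real.log r with hφ
  have hanti : StrictAntiOn φ (Set.Ici r) := by
    apply strictAntiOn_of_deriv_neg (convex_Ici r)
    · apply ContinuousOn.sub
      · exact continuousOn_const.mul (Real.continuousOn_log.mono (by
          intro u hu
          simp only [Set.mem_Ici] at hu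
          simp only [Set.mem_compl_iff, Set.mem_singleton_iff]
          nlinarith))
      · exact (continuousOn_id.sub continuousOn_const).mul continuousOn_const
    · intro u hu
      rw [interior_Ici] at hu
      have hu0 : (0:ℝ) < u := lt_trans hr0 hu
      have hd : HasDerivAt φ ((r - 1) * u⁻¹ - Real.log r) u := by
        have h1 : HasDerivAt (fun u => (r - 1) * Real.log u) ((r - 1) * u⁻¹) u :=
          (Real.hasDerivAt_log hu0.ne').const_mul (r - 1)
        have h2 : HasDerivAt (fun u : ℝ => (u - 1) * Real.log r) (Real.log r) u := by
          simpa using ((hasDerivAt_id u).sub_const 1).mul_const (Real.log r)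
        exact h1.sub h2
      rw [hd.deriv]
      have hlog : 1 - 1/r < Real.log r := aux_log_lower r hr
      have : (r - 1) * u⁻¹ < 1 - 1/r := by
        rw [one_div]
        have h1 : (r - 1) * u⁻¹ < (r - 1) * r⁻¹ := by
          apply mul_lt_mul_of_pos_left _ (by linarith)
          exact inv_strictAnti₀ hr0 hu
        have h2 : (r - 1) * r⁻¹ = 1 - r⁻¹ := by field_simp
        linarith
      linarith
  have h := hanti (Set.self_mem_Ici) (Set.mem_Ici.2 hrs.le) hrs
  simp only [hφ] at h
  nlinarith [h]

/-- Key inequality: for `x > y > z > 0`,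
`(x-y) z log(x/z) < (x-z) y log(x/y)`. -/
lemma aux_key1 (x y z : ℝ) (hz : 0 < z) (hzy : z < y) (hyx : y < x) :
    (x - y) * z * Real.log (x / z) < (x - z) * y * Real.log (x / y) := by
  have hy : (0:ℝ) < y := hz.trans hzy
  have hx : (0:ℝ) < x := hy.trans hyx
  have hr : 1 < x / y := (one_lt_div hy).2 hyx
  have hrs : x / y < x / z := by
    rw [div_lt_div_iff₀ hy hz]
    nlinarith
  have h := aux_key2 (x / y) (x / z) hr hrs
  have h' := mul_lt_mul_of_pos_right h (mul_pos hy hz)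
  have e1 : (x / y - 1) * Real.log (x / z) * (y * z) = (x - y) * z * Real.log (x / z) := by
    field_simp
  have e2 : (x / z - 1) * Real.log (x / y) * (y * z) = (x - z) * y * Real.log (x / y) := by
    field_simp
  linarith [h', e1, e2]

/-- Key monotonicity step of the CARA cutoff-ordering proposition: for `a > b > c > 0`,
the ratio `(log(a + t) − log(b + t)) / (log(a + t) − log(c + t))` is strictly increasing
in `t` on `[0, ∞)`. -/
theorem log_ratio_strictMonoOn (a b c : ℝ) (hab : a > b) (hbc : b > c) (hc : c > 0) :
    StrictMonoOn
      (fun t : ℝ => (Real.log (a + t) - Real.log (b + t)) /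
        (Real.log (a + t) - Real.log (c + t)))
      (Set.Ici 0) := by
  have hb : (0:ℝ) < b := hc.trans hbc
  have ha : (0:ℝ) < a := hb.trans hab
  apply strictMonoOn_of_deriv_pos (convex_Ici 0)
  · -- continuity
    apply ContinuousOn.div
    · exact ((continuous_const.add continuous_id).continuousOn.log (fun t ht => by
        simp only [Set.mem_Ici, Pi.add_apply, id_eq] at ht ⊢; positivity)).sub
        ((continuous_const.add continuous_id).continuousOn.log (fun t ht => by
        simp only [Set.mem_Ici, Pi.add_apply, id_eq] at ht ⊢; positivity))
    · exact ((continuous_const.add continuous_id).continuousOn.log (fun t ht => by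
        simp only [Set.mem_Ici, Pi.add_apply, id_eq] at ht ⊢; positivity)).sub
        ((continuous_const.add continuous_id).continuousOn.log (fun t ht => by
        simp only [Set.mem_Ici, Pi.add_apply, id_eq] at ht ⊢; positivity))
    · intro t ht
      simp only [Set.mem_Ici] at ht
      have h1 : Real.log (c + t) < Real.log (a + t) :=
        Real.log_lt_log (by linarith) (by linarith)
      exact sub_ne_zero.2 (ne_of_gt h1)
  · intro t ht
    rw [interior_Ici, Set.mem_Ioi] at ht
    have hct : (0:ℝ) < c + t := by linarith
    have hbt : (0:ℝ) < b + t := by linarith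
    have hat : (0:ℝ) < a + t := by linarith
    have hcb : c + t < b + t := by linarith
    have hba : b + t < a + t := by linarith
    have hD0 : 0 < Real.log (a + t) - Real.log (c + t) :=
      sub_pos.2 (Real.log_lt_log hct (by linarith))
    -- derivatives
    have hlin : ∀ d : ℝ, HasDerivAt (fun u : ℝ => d + u) 1 t :=
      fun d => (hasDerivAt_id t).const_add d
    have hLa : HasDerivAt (fun u : ℝ => Real.log (a + u)) ((a + t)⁻¹) t := by
      simpa [Function.comp_def] using (Real.hasDerivAt_log hat.ne').comp t (hlin a)
    have hLb : HasDerivAt (fun u : ℝ => Real.log (b + u)) ((b + t)⁻¹) t := by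
      simpa [Function.comp_def] using (Real.hasDerivAt_log hbt.ne').comp t (hlin b)
    have hLc : HasDerivAt (fun u : ℝ => Real.log (c + u)) ((c + t)⁻¹) t := by
      simpa [Function.comp_def] using (Real.hasDerivAt_log hct.ne').comp t (hlin c)
    have hN : HasDerivAt (fun u : ℝ => Real.log (a + u) - Real.log (b + u))
        ((a + t)⁻¹ - (b + t)⁻¹) t := hLa.sub hLb
    have hDd : HasDerivAt (fun u : ℝ => Real.log (a + u) - Real.log (c + u))
        ((a + t)⁻¹ - (c + t)⁻¹) t := hLa.sub hLc
    have hf := hN.div hDd hD0.ne'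
    rw [(show HasDerivAt (fun u : ℝ => (Real.log (a + u) - Real.log (b + u)) /
        (Real.log (a + u) - Real.log (c + u))) _ t from hf).deriv]
    apply div_pos _ (by positivity)
    -- numerator positivity
    have key := aux_key1 (a + t) (b + t) (c + t) hct hcb hba
    have eN : Real.log (a + t) - Real.log (b + t) = Real.log ((a + t) / (b + t)) :=
      (Real.log_div hat.ne' hbt.ne').symm
    have eD : Real.log (a + t) - Real.log (c + t) = Real.log ((a + t) / (c + t)) :=
      (Real.log_div hat.ne' hct.ne').symm
    rw [eN, eD]
    set L1 := Real.log ((a + t) / (b + t))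
    set L2 := Real.log ((a + t) / (c + t))
    have eq : ((a + t)⁻¹ - (b + t)⁻¹) * L2 - L1 * ((a + t)⁻¹ - (c + t)⁻¹)
        = (((a + t) - (c + t)) * (b + t) * L1 - ((a + t) - (b + t)) * (c + t) * L2)
          / ((a + t) * (b + t) * (c + t)) := by
      field_simp; ring
    rw [eq]
    apply div_pos _ (by positivity)
    linarith [key]
end

section
/- (Monotone argmax under single crossing) Suppose U : ℝ → Fin D → ℝ satisfies the single-crossing property in the natural ordering. Let K be a nonempty subset of Fin D, let ν₁ < ν₂ be real numbers, and suppose j₁, j₂ ∈ K satisfy U ν₁ j₁ > U ν₁ k for all k ∈ K with k ≠ j₁, and U ν₂ j₂ > U ν₂ k for all k ∈ K with k ≠ j₂. Then j₁ ≤ j₂. -/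
/-! If the larger alternative `j₁` beat `j₂ < j₁` at `ν₁`, the cutoff of the pair lies at or
below `ν₁`, so `j₁` beats `j₂` strictly at every `ν₂ > ν₁`, contradicting the optimality
of `j₂` at `ν₂`. -/

lemma lt_of_le_of_single_crossing {β : Type*} [LinearOrder β] {f g : β → ℝ} {c ν₁ ν₂ : β}
    (hbelow : ∀ ν, ν < c → f ν > g ν) (habove : ∀ ν, ν > c → f ν < g ν)
    (hle : f ν₁ ≤ g ν₁) (hν : ν₁ < ν₂) : f ν₂ < g ν₂ :=
  have hc : c ≤ ν₁ := le_of_not_gt fun h => (hbelow ν₁ h).not_ge hle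
  habove ν₂ (hc.trans_lt hν)

theorem monotone_argmax_single_crossing_general (D : ℕ) (U : ℝ → Fin D → ℝ)
    (c : Fin D → Fin D → ℝ)
    (hSCP : ∀ j k : Fin D, j < k →
      (∀ ν, ν < c j k → U ν j > U ν k) ∧ U (c j k) j = U (c j k) k ∧
        (∀ ν, ν > c j k → U ν j < U ν k))
    (K : Finset (Fin D)) (ν₁ ν₂ : ℝ) (hν : ν₁ < ν₂)
    (j₁ j₂ : Fin D) (hj₁K : j₁ ∈ K) (hj₂K : j₂ ∈ K)
    (hmax₁ : ∀ k ∈ K, k ≠ j₁ → U ν₁ j₁ > U ν₁ k)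
    (hmax₂ : ∀ k ∈ K, k ≠ j₂ → U ν₂ j₂ > U ν₂ k) :
    j₁ ≤ j₂ := by
  by_contra! hlt
  obtain ⟨hbelow, -, habove⟩ := hSCP j₂ j₁ hlt
  have hprefer₁ : U ν₁ j₂ ≤ U ν₁ j₁ := (hmax₁ j₂ hj₂K hlt.ne).le
  have hprefer₂ : U ν₂ j₂ < U ν₂ j₁ :=
    lt_of_le_of_single_crossing (f := (U · j₂)) hbelow habove hprefer₁ hν
  exact (hmax₂ j₁ hj₁K hlt.ne').not_gt hprefer₂

/-- Monotone argmax under single crossing: if utilities satisfy the single-crossing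
property in the natural ordering, then the strict maximizer over any consideration set
`K` is nondecreasing in the preference parameter. -/
theorem monotone_argmax_single_crossing (D : ℕ) (U : ℝ → Fin D → ℝ)
    (c : Fin D → Fin D → ℝ)
    (hSCP : ∀ j k : Fin D, j < k →
      (∀ ν, ν < c j k → U ν j > U ν k) ∧ U (c j k) j = U (c j k) k ∧
        (∀ ν, ν > c j k → U ν j < U ν k))
    (K : Finset (Fin D)) (hK : K.Nonempty) (ν₁ ν₂ : ℝ) (hν : ν₁ < ν₂)
    (j₁ j₂ : Fin D) (hj₁K : j₁ ∈ K) (hj₂K : j₂ ∈ K)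
    (hmax₁ : ∀ k ∈ K, k ≠ j₁ → U ν₁ j₁ > U ν₁ k)
    (hmax₂ : ∀ k ∈ K, k ≠ j₂ → U ν₂ j₂ > U ν₂ k) :
    j₁ ≤ j₂ :=
  monotone_argmax_single_crossing_general D U c hSCP K ν₁ ν₂ hν j₁ j₂ hj₁K hj₂K hmax₁ hmax₂
end

section
/- (Proposition 2: Generalized Preference Monotonicity) Suppose U : ℝ → Fin D → ℝ satisfies the single-crossing property in the natural ordering. Let Q : Finset (Fin D) → ℝ be nonnegative with Q ∅ = 0. Let ν₁ < ν₂ and suppose that for i ∈ {1, 2} and every nonempty K ⊆ Fin D there is an alternative mᵢ(K) ∈ K with U νᵢ (mᵢ K) > U νᵢ k for all k ∈ K with k ≠ mᵢ K. Then for every natural number J, Σ_{K ⊆ Fin D} Q K · (indicator that the index of m₁ K is less than J) ≥ Σ_{K ⊆ Fin D} Q K · (indicator that the index of m₂ K is less than J). -/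
/-! Under single crossing, `U ν j ≤ U ν k` for some `j < k` forces `ν` past the cutoff `c j k`,
so every larger parameter strictly prefers `k` to `j`. Hence on every consideration set the strict
maximizer can only move to higher indices as `ν` grows, and each `Q`-weighted indicator of
"index below `J`" can only drop. -/

section SingleCrossing

variable {P ι β : Type*} [LinearOrder P] [LinearOrder β]

theorem lt_of_single_crossing {U : P → ι → β} {c : ι → ι → P} {j k : ι}
    (hSCP : (∀ ν, ν < c j k → U ν j > U ν k) ∧ U (c j k) j = U (c j k) k ∧
      (∀ ν, ν > c j k → U ν j < U ν k))
    {ν₁ ν₂ : P} (hν : ν₁ < ν₂) (hle : U ν₁ j ≤ U ν₁ k) : U ν₂ j < U ν₂ k := by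
  obtain ⟨hbelow, -, habove⟩ := hSCP
  have hcut : c j k ≤ ν₁ := not_lt.mp fun h => (hbelow ν₁ h).not_ge hle
  exact habove ν₂ (hcut.trans_lt hν)

theorem strictMaximizer_mono [LinearOrder ι] {U : P → ι → β} {c : ι → ι → P}
    (hSCP : ∀ j k : ι, j < k →
      (∀ ν, ν < c j k → U ν j > U ν k) ∧ U (c j k) j = U (c j k) k ∧
        (∀ ν, ν > c j k → U ν j < U ν k))
    {ν₁ ν₂ : P} (hν : ν₁ < ν₂) {K : Finset ι} {m₁ m₂ : ι}
    (hm₁ : m₁ ∈ K ∧ ∀ k ∈ K, k ≠ m₁ → U ν₁ m₁ > U ν₁ k)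
    (hm₂ : m₂ ∈ K ∧ ∀ k ∈ K, k ≠ m₂ → U ν₂ m₂ > U ν₂ k) : m₁ ≤ m₂ := by
  by_contra! hlt
  have h₁ : U ν₁ m₂ ≤ U ν₁ m₁ := (hm₁.2 m₂ hm₂.1 hlt.ne).le
  exact (hm₂.2 m₁ hm₁.1 hlt.ne').not_gt (lt_of_single_crossing (hSCP m₂ m₁ hlt) hν h₁)

end SingleCrossing

theorem ite_lt_one_zero_le_of_le {a b J : ℕ} (h : a ≤ b) :
    (if b < J then (1 : ℝ) else 0) ≤ if a < J then 1 else 0 := by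
  split_ifs <;> first | omega | norm_num

/-- Proposition 2 (Generalized Preference Monotonicity): under the single-crossing
property in the natural ordering and a consideration mechanism `Q` independent of
preferences, the probability of choosing one of the first `J` alternatives is
nonincreasing in the preference parameter. Here `mᵢ K` is the strict maximizer of
`U νᵢ` on the consideration set `K`. -/
theorem generalized_preference_monotonicity (D : ℕ) (U : ℝ → Fin D → ℝ)
    (c : Fin D → Fin D → ℝ)
    (hSCP : ∀ j k : Fin D, j < k →
      (∀ ν, ν < c j k → U ν j > U ν k) ∧ U (c j k) j = U (c j k) k ∧
        (∀ ν, ν > c j k → U ν j < U ν k))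
    (Q : Finset (Fin D) → ℝ) (hQ : ∀ K, 0 ≤ Q K) (hQ0 : Q ∅ = 0)
    (ν₁ ν₂ : ℝ) (hν : ν₁ < ν₂)
    (m₁ m₂ : Finset (Fin D) → Fin D)
    (hm₁ : ∀ K : Finset (Fin D), K.Nonempty →
      m₁ K ∈ K ∧ ∀ k ∈ K, k ≠ m₁ K → U ν₁ (m₁ K) > U ν₁ k)
    (hm₂ : ∀ K : Finset (Fin D), K.Nonempty →
      m₂ K ∈ K ∧ ∀ k ∈ K, k ≠ m₂ K → U ν₂ (m₂ K) > U ν₂ k) :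
    ∀ J : ℕ,
      ∑ K : Finset (Fin D), Q K * (if (m₁ K : ℕ) < J then (1 : ℝ) else 0) ≥
      ∑ K : Finset (Fin D), Q K * (if (m₂ K : ℕ) < J then (1 : ℝ) else 0) := by
  intro J
  refine Finset.sum_le_sum fun K _ => ?_
  rcases K.eq_empty_or_nonempty with rfl | hK
  · simp [hQ0]
  · have hle : m₁ K ≤ m₂ K := strictMaximizer_mono hSCP hν (hm₁ K hK) (hm₂ K hK)
    exact mul_le_mul_of_nonneg_left (ite_lt_one_zero_le_of_le hle) (hQ K)
end

section
/- (Identification in the binary-choice limited-consideration model with large support) Let ν̄ > 0. For i = 1, 2 let Fᵢ : ℝ → ℝ be a nondecreasing continuous function with Fᵢ(ν) = 0 for ν ≤ 0 and Fᵢ(ν) = 1 for ν ≥ ν̄, and let αᵢ ∈ (0, 1]. Let X be a set and c : X → ℝ a function whose range covers the support: [0, ν̄] ⊆ c '' X. If α₁ · F₁(c x) = α₂ · F₂(c x) for every x ∈ X, then α₁ = α₂ and F₁ = F₂. -/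
/-!
At the top of the support both distribution functions equal `1`, so the observed probability
there is the consideration probability itself: `α₁ = α₂`. Cancelling it, `F₁ = F₂` on `[0, ν̄]`,
which `c` covers; outside `[0, ν̄]` both are `0` or both are `1`.
-/

open Set

theorem eq_of_eqOn_Iic_of_eqOn_Icc_of_eqOn_Ici {α β : Type*} [LinearOrder α] {f g : α → β}
    {a b : α} (hlo : EqOn f g (Iic a)) (hmid : EqOn f g (Icc a b)) (hhi : EqOn f g (Ici b)) :
    f = g := by
  funext x
  rcases le_or_gt x a with hxa | hax
  · exact hlo hxa
  rcases le_or_gt b x with hbx | hxb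
  · exact hhi hbx
  · exact hmid ⟨hax.le, hxb.le⟩

theorem binary_limited_consideration_identified_general (νbar : ℝ) (hνbar : 0 < νbar)
    (F₁ F₂ : ℝ → ℝ)
    (hF₁0 : ∀ ν, ν ≤ 0 → F₁ ν = 0) (hF₂0 : ∀ ν, ν ≤ 0 → F₂ ν = 0)
    (hF₁1 : ∀ ν, νbar ≤ ν → F₁ ν = 1) (hF₂1 : ∀ ν, νbar ≤ ν → F₂ ν = 1)
    (α₁ α₂ : ℝ) (hα₂ : 0 < α₂)
    (X : Type*) (c : X → ℝ) (hcov : Set.Icc 0 νbar ⊆ Set.range c)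
    (hobs : ∀ x : X, α₁ * F₁ (c x) = α₂ * F₂ (c x)) :
    α₁ = α₂ ∧ F₁ = F₂ := by
  have hprob : EqOn (fun ν ↦ α₁ * F₁ ν) (fun ν ↦ α₂ * F₂ ν) (Icc 0 νbar) :=
    (eqOn_range.2 (funext hobs)).mono hcov
  have hα : α₁ = α₂ := by
    simpa [hF₁1 νbar le_rfl, hF₂1 νbar le_rfl] using hprob ⟨hνbar.le, le_rfl⟩
  refine ⟨hα, eq_of_eqOn_Iic_of_eqOn_Icc_of_eqOn_Ici (a := 0) (b := νbar) ?_ ?_ ?_⟩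
  · exact fun ν hν ↦ (hF₁0 ν hν).trans (hF₂0 ν hν).symm
  · exact fun ν hν ↦ mul_left_cancel₀ hα₂.ne' (hα ▸ hprob hν)
  · exact fun ν hν ↦ (hF₁1 ν hν).trans (hF₂1 ν hν).symm

/-- Identification in the binary-choice limited-consideration model with large support:
if the cutoff `c` covers the whole support `[0, ν̄]` and two configurations
`(α₁, F₁)`, `(α₂, F₂)` generate the same choice probabilities `α · F(c x)`, then they
coincide. -/
theorem binary_limited_consideration_identified (νbar : ℝ) (hνbar : 0 < νbar)
    (F₁ F₂ : ℝ → ℝ) (hF₁mono : Monotone F₁) (hF₂mono : Monotone F₂)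
    (hF₁cont : Continuous F₁) (hF₂cont : Continuous F₂)
    (hF₁0 : ∀ ν, ν ≤ 0 → F₁ ν = 0) (hF₂0 : ∀ ν, ν ≤ 0 → F₂ ν = 0)
    (hF₁1 : ∀ ν, νbar ≤ ν → F₁ ν = 1) (hF₂1 : ∀ ν, νbar ≤ ν → F₂ ν = 1)
    (α₁ α₂ : ℝ) (hα₁ : 0 < α₁) (hα₁le : α₁ ≤ 1) (hα₂ : 0 < α₂) (hα₂le : α₂ ≤ 1)
    (X : Type*) (c : X → ℝ) (hcov : Set.Icc 0 νbar ⊆ Set.range c)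
    (hobs : ∀ x : X, α₁ * F₁ (c x) = α₂ * F₂ (c x)) :
    α₁ = α₂ ∧ F₁ = F₂ :=
  binary_limited_consideration_identified_general νbar hνbar F₁ F₂ hF₁0 hF₂0 hF₁1 hF₂1 α₁ α₂ hα₂ X c
    hcov hobs
end

section
/- (Proposition 1, identification under ordered consideration) Let D ≥ 2 and suppose for i = 1, 2: μᵢ is a probability measure on ℝ and Qᵢ : Finset (Fin D) → ℝ is nonnegative with Σ_K Qᵢ K = 1, satisfying Qᵢ K = 0 for every K containing alternative 0 but not alternative 1, and Σ_{K ∋ 0} Qᵢ K > 0. Suppose U : X → ℝ → Fin D → ℝ, with ν ↦ U x ν j measurable for each x and j, satisfies: (b) there is c : X → ℝ such that for every x ∈ X and ν ∈ ℝ, U x ν 0 > U x ν 1 if and only if ν < c x; (c) for every x ∈ X and ν, if U x ν 0 > U x ν 1 then U x ν 0 > U x ν j for every alternative j ∉ {0, 1}; and (d) there are ν^l < ν^u with [ν^l, ν^u] ⊆ c '' X. If the induced choice probabilities of alternative 0 coincide, P₁(x) = P₂(x) for all x ∈ X, then for every ν ∈ [ν^l, ν^u], (μ₁((−∞, ν))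 − μ₁((−∞, ν^l))) · (μ₂((−∞, ν^u)) − μ₂((−∞, ν^l))) = (μ₂((−∞, ν)) − μ₂((−∞, ν^l))) · (μ₁((−∞, ν^u)) − μ₁((−∞, ν^l))); that is, the conditional preference distributions on [ν^l, ν^u] coincide. -/
/-!
Under ordered consideration every consideration set that contains alternative `0` and has
positive weight also contains alternative `1`, and among such sets `0` is chosen exactly when
it beats `1`, i.e. when `ν < c x`. Hence `Pᵢ(x) = qᵢ · μᵢ(-∞, c x)` with `qᵢ` the probability
that `0` is considered. As `c x` sweeps out `[ν^l, ν^u]`, the two distribution functions are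
proportional there, and proportional functions have proportional increments.
-/

open MeasureTheory Set

section OrderedConsideration

variable {ι : Type*} (u : ℝ → ι → ℝ) {i₀ i₁ : ι} {c : ℝ}

theorem setOf_forall_gt_eq_Iio (hi : i₁ ≠ i₀) (hcut : ∀ ν, u ν i₀ > u ν i₁ ↔ ν < c)
    (hord : ∀ ν, u ν i₀ > u ν i₁ → ∀ j, j ≠ i₀ → j ≠ i₁ → u ν i₀ > u ν j)
    {K : Finset ι} (hK : i₁ ∈ K) :
    {ν | ∀ k ∈ K, k ≠ i₀ → u ν i₀ > u ν k} = Iio c := by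
  ext ν
  refine ⟨fun h => (hcut ν).1 (h i₁ hK hi), fun h k _ hk₀ => ?_⟩
  have hbeat : u ν i₀ > u ν i₁ := (hcut ν).2 h
  obtain rfl | hk₁ := eq_or_ne k i₁
  · exact hbeat
  · exact hord ν hbeat k hk₀ hk₁

theorem sum_mul_measure_setOf_forall_gt [Fintype ι] [DecidableEq ι] (μ : Measure ℝ)
    (Q : Finset ι → ℝ) (hQ : ∀ K, i₀ ∈ K → i₁ ∉ K → Q K = 0) (hi : i₁ ≠ i₀)
    (hcut : ∀ ν, u ν i₀ > u ν i₁ ↔ ν < c)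
    (hord : ∀ ν, u ν i₀ > u ν i₁ → ∀ j, j ≠ i₀ → j ≠ i₁ → u ν i₀ > u ν j) :
    ∑ K ∈ Finset.univ.filter (fun K : Finset ι => i₀ ∈ K),
        Q K * (μ {ν | ∀ k ∈ K, k ≠ i₀ → u ν i₀ > u ν k}).toReal =
      (∑ K ∈ Finset.univ.filter (fun K : Finset ι => i₀ ∈ K), Q K) * (μ (Iio c)).toReal := by
  rw [Finset.sum_mul]
  refine Finset.sum_congr rfl fun K hK => ?_
  by_cases hK₁ : i₁ ∈ K
  · rw [setOf_forall_gt_eq_Iio u hi hcut hord hK₁]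
  · rw [hQ K (Finset.mem_filter.1 hK).2 hK₁, zero_mul, zero_mul]

end OrderedConsideration

theorem sub_mul_sub_eq_of_mul_eq_mul {R : Type*} [CommRing R] [IsDomain R]
    {q₁ q₂ a₀ a₁ a₂ b₀ b₁ b₂ : R} (hq : q₁ ≠ 0)
    (h₀ : q₁ * a₀ = q₂ * b₀) (h₁ : q₁ * a₁ = q₂ * b₁) (h₂ : q₁ * a₂ = q₂ * b₂) :
    (a₁ - a₀) * (b₂ - b₀) = (b₁ - b₀) * (a₂ - a₀) := by
  refine mul_left_cancel₀ hq ?_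
  linear_combination (b₂ - b₀) * (h₁ - h₀) - (b₁ - b₀) * (h₂ - h₀)

theorem identification_ordered_consideration_general (D : ℕ) (X : Type*)
    (U : X → ℝ → Fin (D + 2) → ℝ)
    (μ₁ μ₂ : Measure ℝ)
    (Q₁ Q₂ : Finset (Fin (D + 2)) → ℝ)
    (hQ₁ord : ∀ K : Finset (Fin (D + 2)), 0 ∈ K → 1 ∉ K → Q₁ K = 0)
    (hQ₂ord : ∀ K : Finset (Fin (D + 2)), 0 ∈ K → 1 ∉ K → Q₂ K = 0)
    (hQ₁cons : 0 < ∑ K ∈ Finset.univ.filter (fun K : Finset (Fin (D + 2)) => 0 ∈ K), Q₁ K)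
    (c : X → ℝ)
    (hcut : ∀ (x : X) (ν : ℝ), U x ν 0 > U x ν 1 ↔ ν < c x)
    (hord : ∀ (x : X) (ν : ℝ), U x ν 0 > U x ν 1 →
      ∀ j : Fin (D + 2), j ≠ 0 → j ≠ 1 → U x ν 0 > U x ν j)
    (νl νu : ℝ) (hcov : Set.Icc νl νu ⊆ Set.range c)
    (hobs : ∀ x : X,
      ∑ K ∈ Finset.univ.filter (fun K : Finset (Fin (D + 2)) => 0 ∈ K),
        Q₁ K * (μ₁ {ν | ∀ k ∈ K, k ≠ 0 → U x ν 0 > U x ν k}).toReal =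
      ∑ K ∈ Finset.univ.filter (fun K : Finset (Fin (D + 2)) => 0 ∈ K),
        Q₂ K * (μ₂ {ν | ∀ k ∈ K, k ≠ 0 → U x ν 0 > U x ν k}).toReal) :
    ∀ ν : ℝ, νl ≤ ν → ν ≤ νu →
      ((μ₁ (Set.Iio ν)).toReal - (μ₁ (Set.Iio νl)).toReal) *
          ((μ₂ (Set.Iio νu)).toReal - (μ₂ (Set.Iio νl)).toReal) =
        ((μ₂ (Set.Iio ν)).toReal - (μ₂ (Set.Iio νl)).toReal) *
          ((μ₁ (Set.Iio νu)).toReal - (μ₁ (Set.Iio νl)).toReal) := by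
  have cdf_proportional : ∀ t ∈ Icc νl νu,
      (∑ K ∈ Finset.univ.filter (fun K : Finset (Fin (D + 2)) => 0 ∈ K), Q₁ K) *
          (μ₁ (Iio t)).toReal =
        (∑ K ∈ Finset.univ.filter (fun K : Finset (Fin (D + 2)) => 0 ∈ K), Q₂ K) *
          (μ₂ (Iio t)).toReal := by
    intro t ht
    obtain ⟨x, rfl⟩ := hcov ht
    rw [← sum_mul_measure_setOf_forall_gt _ μ₁ Q₁ hQ₁ord one_ne_zero (hcut x) (hord x),
      ← sum_mul_measure_setOf_forall_gt _ μ₂ Q₂ hQ₂ord one_ne_zero (hcut x) (hord x)]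
    exact hobs x
  intro ν hl hu
  exact sub_mul_sub_eq_of_mul_eq_mul hQ₁cons.ne' (cdf_proportional νl ⟨le_rfl, hl.trans hu⟩)
    (cdf_proportional ν ⟨hl, hu⟩) (cdf_proportional νu ⟨hl.trans hu, le_rfl⟩)

/-- Proposition 1 (identification under ordered consideration): with `D + 2 ≥ 2`
alternatives, alternative `0` considered with positive probability and only together
with alternative `1`, a cutoff `c` between alternatives `0` and `1` covering
`[ν^l, ν^u]`, and alternative `0` preferred to everything else whenever it beats
alternative `1`, equality of the induced choice probabilities of alternative `0`
implies that the preference distributions conditional on `[ν^l, ν^u]` coincide. -/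
theorem identification_ordered_consideration (D : ℕ) (X : Type*)
    (U : X → ℝ → Fin (D + 2) → ℝ)
    (hUmeas : ∀ (x : X) (j : Fin (D + 2)), Measurable fun ν => U x ν j)
    (μ₁ μ₂ : Measure ℝ) [IsProbabilityMeasure μ₁] [IsProbabilityMeasure μ₂]
    (Q₁ Q₂ : Finset (Fin (D + 2)) → ℝ)
    (hQ₁pos : ∀ K, 0 ≤ Q₁ K) (hQ₂pos : ∀ K, 0 ≤ Q₂ K)
    (hQ₁sum : ∑ K : Finset (Fin (D + 2)), Q₁ K = 1)
    (hQ₂sum : ∑ K : Finset (Fin (D + 2)), Q₂ K = 1)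
    (hQ₁ord : ∀ K : Finset (Fin (D + 2)), 0 ∈ K → 1 ∉ K → Q₁ K = 0)
    (hQ₂ord : ∀ K : Finset (Fin (D + 2)), 0 ∈ K → 1 ∉ K → Q₂ K = 0)
    (hQ₁cons : 0 < ∑ K ∈ Finset.univ.filter (fun K : Finset (Fin (D + 2)) => 0 ∈ K), Q₁ K)
    (hQ₂cons : 0 < ∑ K ∈ Finset.univ.filter (fun K : Finset (Fin (D + 2)) => 0 ∈ K), Q₂ K)
    (c : X → ℝ)
    (hcut : ∀ (x : X) (ν : ℝ), U x ν 0 > U x ν 1 ↔ ν < c x)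
    (hord : ∀ (x : X) (ν : ℝ), U x ν 0 > U x ν 1 →
      ∀ j : Fin (D + 2), j ≠ 0 → j ≠ 1 → U x ν 0 > U x ν j)
    (νl νu : ℝ) (hν : νl < νu) (hcov : Set.Icc νl νu ⊆ Set.range c)
    (hobs : ∀ x : X,
      ∑ K ∈ Finset.univ.filter (fun K : Finset (Fin (D + 2)) => 0 ∈ K),
        Q₁ K * (μ₁ {ν | ∀ k ∈ K, k ≠ 0 → U x ν 0 > U x ν k}).toReal =
      ∑ K ∈ Finset.univ.filter (fun K : Finset (Fin (D + 2)) => 0 ∈ K),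
        Q₂ K * (μ₂ {ν | ∀ k ∈ K, k ≠ 0 → U x ν 0 > U x ν k}).toReal) :
    ∀ ν : ℝ, νl ≤ ν → ν ≤ νu →
      ((μ₁ (Set.Iio ν)).toReal - (μ₁ (Set.Iio νl)).toReal) *
          ((μ₂ (Set.Iio νu)).toReal - (μ₂ (Set.Iio νl)).toReal) =
        ((μ₂ (Set.Iio ν)).toReal - (μ₂ (Set.Iio νl)).toReal) *
          ((μ₁ (Set.Iio νu)).toReal - (μ₁ (Set.Iio νl)).toReal) :=
  identification_ordered_consideration_general D X U μ₁ μ₂ Q₁ Q₂ hQ₁ord hQ₂ord hQ₁cons c hcut hord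
    νl νu hcov hobs
end

section
/- (Crux of Proposition on non-monotonicity in RUM: equalization of Mixed Logit probabilities) Let D ≥ 1, μ ∈ [0, 1], and for each alternative j ∈ Fin D let a_j > 0 and b_j > 0 be wealth outcomes. For ν > 0 define the CARA expected utility EU_j(ν) = (1 − μ)·(1 − exp(−ν a_j))/ν + μ·(1 − exp(−ν b_j))/ν and the logit choice probabilities P_j(ν) = exp(EU_j(ν)) / Σ_{k ∈ Fin D} exp(EU_k(ν)). Then for every j, P_j(ν) → 1/D as ν → ∞. -/
open Filter

lemma cara_term_tendsto_zero (c : ℝ) (hc : 0 < c) (w : ℝ) :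
    Tendsto (fun ν : ℝ => w * (1 - Real.exp (-ν * c)) / ν) atTop (nhds 0) := by
  have h1 : Tendsto (fun ν : ℝ => Real.exp (-ν * c)) atTop (nhds 0) := by
    have hmul : Tendsto (fun ν : ℝ => ν * c) atTop atTop :=
      (tendsto_id (α := ℝ)).atTop_mul_const hc
    have : Tendsto (fun ν : ℝ => -ν * c) atTop atBot := by
      simp only [neg_mul]
      exact tendsto_neg_atTop_atBot.comp hmul
    exact Real.tendsto_exp_atBot.comp this
  have h2 : Tendsto (fun ν : ℝ => w * (1 - Real.exp (-ν * c))) atTop (nhds (w * (1 - 0))) :=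
    tendsto_const_nhds.mul (tendsto_const_nhds.sub h1)
  have h3 : Tendsto (fun ν : ℝ => (ν : ℝ)⁻¹) atTop (nhds 0) := tendsto_inv_atTop_zero
  have := h2.mul h3
  simpa [div_eq_mul_inv] using this

lemma eu_tendsto_zero (μ : ℝ) (x y : ℝ) (hx : 0 < x) (hy : 0 < y) :
    Tendsto (fun ν : ℝ => (1 - μ) * (1 - Real.exp (-ν * x)) / ν +
        μ * (1 - Real.exp (-ν * y)) / ν) atTop (nhds 0) := by
  simpa using (cara_term_tendsto_zero x hx (1 - μ)).add (cara_term_tendsto_zero y hy μ)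

/-- Crux of non-monotonicity in the Mixed Logit RUM with CARA preferences: as risk
aversion `ν → ∞`, the expected utility of every lottery with positive finite stakes
vanishes, so all logit choice probabilities converge to the common value `1/D`. -/
theorem mixed_logit_probs_equalize (D : ℕ) (hD : 1 ≤ D) (μ : ℝ)
    (hμ0 : 0 ≤ μ) (hμ1 : μ ≤ 1) (a b : Fin D → ℝ)
    (ha : ∀ j, 0 < a j) (hb : ∀ j, 0 < b j) :
    ∀ j : Fin D,
      Tendsto
        (fun ν : ℝ =>
          Real.exp ((1 - μ) * (1 - Real.exp (-ν * a j)) / ν +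
              μ * (1 - Real.exp (-ν * b j)) / ν) /
            ∑ k : Fin D,
              Real.exp ((1 - μ) * (1 - Real.exp (-ν * a k)) / ν +
                μ * (1 - Real.exp (-ν * b k)) / ν))
        atTop (nhds (1 / (D : ℝ))) := by
  intro j
  have hnum : Tendsto (fun ν : ℝ =>
      Real.exp ((1 - μ) * (1 - Real.exp (-ν * a j)) / ν +
        μ * (1 - Real.exp (-ν * b j)) / ν)) atTop (nhds 1) := by
    simpa [Function.comp_def] using (Real.continuous_exp.tendsto 0).comp
      (eu_tendsto_zero μ (a j) (b j) (ha j) (hb j))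
  have hden : Tendsto (fun ν : ℝ =>
      ∑ k : Fin D, Real.exp ((1 - μ) * (1 - Real.exp (-ν * a k)) / ν +
        μ * (1 - Real.exp (-ν * b k)) / ν)) atTop (nhds (D : ℝ)) := by
    have : Tendsto (fun ν : ℝ =>
        ∑ k : Fin D, Real.exp ((1 - μ) * (1 - Real.exp (-ν * a k)) / ν +
          μ * (1 - Real.exp (-ν * b k)) / ν)) atTop (nhds (∑ _k : Fin D, (1 : ℝ))) := by
      refine tendsto_finset_sum _ fun k _ => ?_
      simpa [Function.comp_def] using (Real.continuous_exp.tendsto 0).comp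
        (eu_tendsto_zero μ (a k) (b k) (ha k) (hb k))
    simpa using this
  have hD' : (D : ℝ) ≠ 0 := by positivity
  exact hnum.div hden hD'
end
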